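/- Soundness of the metric HML for distributions: for every distribution formula ψ of the metric HML and all distributions Δ₁, Δ₂ over the states of an image-finite pLTS, |⟦ψ⟧(Δ₁) − ⟦ψ⟧(Δ₂)| ≤ K(d_b)(Δ₁,Δ₂), where d_b is the state-based bisimilarity metric and K is the Kantorovich lifting. -/
import Mathlib


open scoped BigOperators

/-- A (full) probability distribution over a finite set `S`. -/
def IsDist {S : Type} [Fintype S] (Δ : S → ℝ) : Prop :=
  (∀ s, 0 ≤ Δ s) ∧ ∑ s, Δ s = 1

/-- A matching (coupling) for a pair of distributions. -/
def IsMatching {S : Type} [Fintype S] (ω : S × S → ℝ) (Δ Θ : S → ℝ) : Prop :=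
  IsDist ω ∧ (∀ s, ∑ t, ω (s, t) = Δ s) ∧ (∀ t, ∑ s, ω (s, t) = Θ t)

/-- The Kantorovich lifting of `d` (primal formulation, via matchings). -/
noncomputable def Kan {S : Type} [Fintype S] (d : S → S → ℝ) (Δ Θ : S → ℝ) : ℝ :=
  sInf {r | ∃ ω : S × S → ℝ, IsMatching ω Δ Θ ∧ r = ∑ p : S × S, d p.1 p.2 * ω p}

/-- The Kantorovich lifting of `d` (dual linear-programming formulation). -/
noncomputable def KanD {S : Type} [Fintype S] (d : S → S → ℝ) (Δ Θ : S → ℝ) : ℝ :=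
  sSup {r | ∃ x : S → ℝ, (∀ s, 0 ≤ x s ∧ x s ≤ 1) ∧ (∀ s t, x s - x t ≤ d s t) ∧
    r = ∑ s, (Δ s - Θ s) * x s}

/-- `d` is a pseudometric. -/
def IsPseudometric {X : Type*} (d : X → X → ℝ) : Prop :=
  (∀ x, d x x = 0) ∧ (∀ x y, d x y = d y x) ∧ ∀ x y z, d x z ≤ d x y + d y z

/-- `d` is `1`-bounded (takes values in `[0,1]`). -/
def Bounded1 {X : Type*} (d : X → X → ℝ) : Prop := ∀ x y, 0 ≤ d x y ∧ d x y ≤ 1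

open Classical in
/-- Infimum of a set of reals with the convention `inf ∅ = 1`. -/
noncomputable def inf1 (s : Set ℝ) : ℝ := if s.Nonempty then sInf s else 1

open Classical in
/-- Supremum of a set of reals with the convention `sup ∅ = 0`. -/
noncomputable def sup0 (s : Set ℝ) : ℝ := if s.Nonempty then sSup s else 0

/-- The Hausdorff lifting of a `1`-bounded metric to subsets. -/
noncomputable def hausd {X : Type*} (d : X → X → ℝ) (P Q : Set X) : ℝ :=
  max (sup0 {r | ∃ x ∈ P, r = inf1 {r' | ∃ y ∈ Q, r' = d x y}})
      (sup0 {r | ∃ y ∈ Q, r = inf1 {r' | ∃ x ∈ P, r' = d x y}})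

/-- A probabilistic labelled transition system. -/
structure PLTS (S : Type) (A : Type) where
  trans : S → A → (S → ℝ) → Prop

/-- The set of `a`-successor distributions of state `s`. -/
def der {S A : Type} (T : PLTS S A) (s : S) (a : A) : Set (S → ℝ) := {Δ | T.trans s a Δ}

/-- Image-finiteness of a pLTS. -/
def ImageFinite {S A : Type} (T : PLTS S A) : Prop := ∀ s a, (der T s a).Finite

/-- Every transition target is a (full) distribution. -/
def WellFormed {S A : Type} [Fintype S] (T : PLTS S A) : Prop :=
  ∀ s a Δ, T.trans s a Δ → IsDist Δ

/-- `d` is a state-based bisimulation metric. -/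
def IsSBM {S A : Type} [Fintype S] (T : PLTS S A) (d : S → S → ℝ) : Prop :=
  IsPseudometric d ∧ Bounded1 d ∧
  ∀ s t (ε : ℝ), 0 ≤ ε → ε < 1 → d s t ≤ ε →
    ∀ a Δ, T.trans s a Δ → ∃ Δ', T.trans t a Δ' ∧ Kan d Δ Δ' ≤ ε

/-- The unit interval `[0,1]` as a type of probabilities. -/
abbrev UI : Type := { p : ℝ // 0 ≤ p ∧ p ≤ 1 }

mutual
  /-- State formulae of the metric HML. -/
  inductive SF (A : Type) : Type where
    | top : SF A
    | neg : SF A → SF A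
    | sub : SF A → UI → SF A
    | and : SF A → SF A → SF A
    | dia : A → DF A → SF A
  /-- Distribution formulae of the metric HML. -/
  inductive DF (A : Type) : Type where
    | sub : DF A → UI → DF A
    | and : DF A → DF A → DF A
    | box : SF A → DF A
end

mutual
  /-- Semantics of state formulae. -/
  noncomputable def semS {S A : Type} [Fintype S] (T : PLTS S A) : SF A → S → ℝ
    | SF.top, _ => 1
    | SF.neg φ, s => 1 - semS T φ s
    | SF.sub φ p, s => max (semS T φ s - p.1) 0
    | SF.and φ₁ φ₂, s => min (semS T φ₁ s) (semS T φ₂ s)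
    | SF.dia a ψ, s => sup0 {r | ∃ Δ, T.trans s a Δ ∧ r = semD T ψ Δ}
  /-- Semantics of distribution formulae. -/
  noncomputable def semD {S A : Type} [Fintype S] (T : PLTS S A) : DF A → (S → ℝ) → ℝ
    | DF.sub ψ p, Δ => max (semD T ψ Δ - p.1) 0
    | DF.and ψ₁ ψ₂, Δ => min (semD T ψ₁ Δ) (semD T ψ₂ Δ)
    | DF.box φ, Δ => ∑ s, Δ s * semS T φ s
end

/-- The logical metric on states induced by state formulae. -/
noncomputable def dLogic {S A : Type} [Fintype S] (T : PLTS S A) : S → S → ℝ :=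
  fun s t => sSup {r | ∃ φ : SF A, r = |semS T φ s - semS T φ t|}

/-- The logical metric on distributions induced by distribution formulae. -/
noncomputable def dDLogic {S A : Type} [Fintype S] (T : PLTS S A) : (S → ℝ) → (S → ℝ) → ℝ :=
  fun Δ Θ => sSup {r | ∃ ψ : DF A, r = |semD T ψ Δ - semD T ψ Θ|}

section AuxSound

variable {S A : Type} [Fintype S]

lemma sup0_le' {s : Set ℝ} {c : ℝ} (hc : 0 ≤ c) (h : ∀ x ∈ s, x ≤ c) : sup0 s ≤ c := by
  unfold sup0
  split
  · exact Real.sSup_le h hc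
  · exact hc

lemma le_sup0' {s : Set ℝ} {x : ℝ} (hx : x ∈ s) (hb : BddAbove s) : x ≤ sup0 s := by
  unfold sup0
  rw [if_pos ⟨x, hx⟩]
  exact le_csSup hb hx

lemma sup0_nonneg' {s : Set ℝ} (h : ∀ x ∈ s, 0 ≤ x) : 0 ≤ sup0 s := by
  unfold sup0
  split
  · exact Real.sSup_nonneg h
  · exact le_refl 0

lemma prod_matching {Δ Θ : S → ℝ} (hΔ : IsDist Δ) (hΘ : IsDist Θ) :
    IsMatching (fun p : S × S => Δ p.1 * Θ p.2) Δ Θ := by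
  refine ⟨⟨fun p => mul_nonneg (hΔ.1 _) (hΘ.1 _), ?_⟩, fun s => ?_, fun t => ?_⟩
  · rw [Fintype.sum_prod_type]
    simp only [← Finset.mul_sum, hΘ.2, mul_one]
    exact hΔ.2
  · simp only [← Finset.mul_sum, hΘ.2, mul_one]
  · simp only [← Finset.sum_mul, hΔ.2, one_mul]

lemma kan_nonneg {d : S → S → ℝ} (hd : ∀ x y, 0 ≤ d x y) (Δ Θ : S → ℝ) :
    0 ≤ Kan d Δ Θ := by
  apply Real.sInf_nonneg
  rintro r ⟨ω, hω, rfl⟩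
  exact Finset.sum_nonneg fun p _ => mul_nonneg (hd _ _) (hω.1.1 p)

lemma sum_diff_le_matching {d : S → S → ℝ} {Δ Θ : S → ℝ} {ω : S × S → ℝ}
    (hω : IsMatching ω Δ Θ) (f : S → ℝ) (hf : ∀ s t, |f s - f t| ≤ d s t) :
    |∑ s, Δ s * f s - ∑ s, Θ s * f s| ≤ ∑ p : S × S, d p.1 p.2 * ω p := by
  have h1 : ∑ s, Δ s * f s = ∑ p : S × S, ω p * f p.1 := by
    rw [Fintype.sum_prod_type]
    refine Finset.sum_congr rfl fun s _ => ?_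
    rw [← hω.2.1 s, Finset.sum_mul]
  have h2 : ∑ s, Θ s * f s = ∑ p : S × S, ω p * f p.2 := by
    rw [Fintype.sum_prod_type_right]
    refine Finset.sum_congr rfl fun t _ => ?_
    rw [← hω.2.2 t, Finset.sum_mul]
  rw [h1, h2, ← Finset.sum_sub_distrib]
  calc |∑ p : S × S, (ω p * f p.1 - ω p * f p.2)|
      ≤ ∑ p : S × S, |ω p * f p.1 - ω p * f p.2| := Finset.abs_sum_le_sum_abs _ _
    _ ≤ ∑ p : S × S, d p.1 p.2 * ω p := by
        refine Finset.sum_le_sum fun p _ => ?_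
        rw [← mul_sub, abs_mul, abs_of_nonneg (hω.1.1 p), mul_comm]
        exact mul_le_mul_of_nonneg_right (hf _ _) (hω.1.1 p)

lemma abs_le_kan {d : S → S → ℝ} {Δ Θ : S → ℝ} (hΔ : IsDist Δ) (hΘ : IsDist Θ)
    {c : ℝ} (h : ∀ ω : S × S → ℝ, IsMatching ω Δ Θ → c ≤ ∑ p : S × S, d p.1 p.2 * ω p) :
    c ≤ Kan d Δ Θ := by
  refine le_csInf ⟨∑ p : S × S, d p.1 p.2 * (Δ p.1 * Θ p.2),
    ⟨fun p : S × S => Δ p.1 * Θ p.2, prod_matching hΔ hΘ, rfl⟩⟩ ?_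
  rintro r ⟨ω, hω, rfl⟩
  exact h ω hω

lemma der_set_eq (T : PLTS S A) (ψ : DF A) (s : S) (a : A) :
    {r | ∃ Δ, T.trans s a Δ ∧ r = semD T ψ Δ} = semD T ψ '' der T s a := by
  ext r
  simp [der, eq_comm, Set.mem_image]

mutual
theorem semS_bdd (T : PLTS S A) (hwf : WellFormed T) :
    ∀ (φ : SF A) (s : S), 0 ≤ semS T φ s ∧ semS T φ s ≤ 1
  | SF.top, s => by rw [semS]; norm_num
  | SF.neg φ, s => by
      have h := semS_bdd T hwf φ s
      rw [semS]
      constructor <;> linarith [h.1, h.2]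
  | SF.sub φ p, s => by
      have h := semS_bdd T hwf φ s
      rw [semS]
      refine ⟨le_max_right _ _, max_le (by linarith [p.2.1, h.2]) zero_le_one⟩
  | SF.and φ₁ φ₂, s => by
      have h1 := semS_bdd T hwf φ₁ s
      have h2 := semS_bdd T hwf φ₂ s
      rw [semS]
      exact ⟨le_min h1.1 h2.1, le_trans (min_le_left _ _) h1.2⟩
  | SF.dia a ψ, s => by
      rw [semS]
      constructor
      · refine sup0_nonneg' ?_
        rintro r ⟨Δ, hΔ, rfl⟩
        exact (semD_bdd T hwf ψ Δ (hwf s a Δ hΔ)).1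
      · refine sup0_le' zero_le_one ?_
        rintro r ⟨Δ, hΔ, rfl⟩
        exact (semD_bdd T hwf ψ Δ (hwf s a Δ hΔ)).2

theorem semD_bdd (T : PLTS S A) (hwf : WellFormed T) :
    ∀ (ψ : DF A) (Δ : S → ℝ), IsDist Δ → 0 ≤ semD T ψ Δ ∧ semD T ψ Δ ≤ 1
  | DF.sub ψ p, Δ, hΔ => by
      have h := semD_bdd T hwf ψ Δ hΔ
      rw [semD]
      refine ⟨le_max_right _ _, max_le (by linarith [p.2.1, h.2]) zero_le_one⟩
  | DF.and ψ₁ ψ₂, Δ, hΔ => by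
      have h1 := semD_bdd T hwf ψ₁ Δ hΔ
      have h2 := semD_bdd T hwf ψ₂ Δ hΔ
      rw [semD]
      exact ⟨le_min h1.1 h2.1, le_trans (min_le_left _ _) h1.2⟩
  | DF.box φ, Δ, hΔ => by
      rw [semD]
      constructor
      · exact Finset.sum_nonneg fun s _ =>
          mul_nonneg (hΔ.1 s) (semS_bdd T hwf φ s).1
      · calc ∑ s, Δ s * semS T φ s ≤ ∑ s, Δ s * 1 :=
              Finset.sum_le_sum fun s _ =>
                mul_le_mul_of_nonneg_left (semS_bdd T hwf φ s).2 (hΔ.1 s)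
          _ = 1 := by simp [hΔ.2]
end

mutual
theorem semS_lip (T : PLTS S A) (hwf : WellFormed T) (hfin : ImageFinite T)
    (db : S → S → ℝ) (hsbm : IsSBM T db) :
    ∀ (φ : SF A) (s t : S), |semS T φ s - semS T φ t| ≤ db s t
  | SF.top, s, t => by
      rw [semS, semS]
      simpa using (hsbm.2.1 s t).1
  | SF.neg φ, s, t => by
      have h := semS_lip T hwf hfin db hsbm φ s t
      rw [semS, semS]
      rw [show (1 - semS T φ s) - (1 - semS T φ t) = -(semS T φ s - semS T φ t) by ring,
        abs_neg]
      exact h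
  | SF.sub φ p, s, t => by
      have h := semS_lip T hwf hfin db hsbm φ s t
      rw [semS, semS]
      refine le_trans (abs_max_sub_max_le_abs _ _ _) ?_
      simpa using h
  | SF.and φ₁ φ₂, s, t => by
      have h1 := semS_lip T hwf hfin db hsbm φ₁ s t
      have h2 := semS_lip T hwf hfin db hsbm φ₂ s t
      rw [semS, semS]
      exact le_trans (abs_min_sub_min_le_max _ _ _ _) (max_le h1 h2)
  | SF.dia a ψ, s, t => by
      have hnn : ∀ u v : S, 0 ≤ db u v := fun u v => (hsbm.2.1 u v).1
      have hsymm : ∀ u v : S, db u v = db v u := fun u v => hsbm.1.2.1 u v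
      by_cases hlt : db s t < 1
      · have key : ∀ u v : S, db u v < 1 →
            sup0 {r | ∃ Δ, T.trans u a Δ ∧ r = semD T ψ Δ} ≤
            sup0 {r | ∃ Δ, T.trans v a Δ ∧ r = semD T ψ Δ} + db u v := by
          intro u v huv
          have hQnn : 0 ≤ sup0 {r | ∃ Δ, T.trans v a Δ ∧ r = semD T ψ Δ} := by
            refine sup0_nonneg' ?_
            rintro r ⟨Δ, hΔ, rfl⟩
            exact (semD_bdd T hwf ψ Δ (hwf v a Δ hΔ)).1
          refine sup0_le' (by linarith [hnn u v]) ?_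
          rintro r ⟨Δ, hΔ, rfl⟩
          obtain ⟨Δ', hΔ', hK⟩ :=
            hsbm.2.2 u v (db u v) (hnn u v) huv le_rfl a Δ hΔ
          have hlipD := semD_lip T hwf hfin db hsbm ψ Δ Δ'
            (hwf u a Δ hΔ) (hwf v a Δ' hΔ')
          have h1 : semD T ψ Δ ≤ semD T ψ Δ' + Kan db Δ Δ' := by
            have := abs_sub_le_iff.1 hlipD
            linarith [this.1]
          have h2 : semD T ψ Δ' ≤ sup0 {r | ∃ Δ, T.trans v a Δ ∧ r = semD T ψ Δ} := by
            refine le_sup0' ⟨Δ', hΔ', rfl⟩ ?_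
            rw [der_set_eq]
            exact ((hfin v a).image _).bddAbove
          linarith
        rw [semS, semS]
        rw [abs_sub_le_iff]
        constructor
        · linarith [key s t hlt]
        · have := key t s (by rwa [← hsymm s t])
          rw [hsymm t s] at this
          linarith
      · have hs := semS_bdd T hwf (SF.dia a ψ) s
        have ht := semS_bdd T hwf (SF.dia a ψ) t
        rw [abs_sub_le_iff]
        constructor <;> [skip; skip] <;> push_neg at hlt <;>
          linarith [hs.1, hs.2, ht.1, ht.2]

theorem semD_lip (T : PLTS S A) (hwf : WellFormed T) (hfin : ImageFinite T)
    (db : S → S → ℝ) (hsbm : IsSBM T db) :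
    ∀ (ψ : DF A) (Δ Θ : S → ℝ), IsDist Δ → IsDist Θ →
      |semD T ψ Δ - semD T ψ Θ| ≤ Kan db Δ Θ
  | DF.sub ψ p, Δ, Θ, hΔ, hΘ => by
      have h := semD_lip T hwf hfin db hsbm ψ Δ Θ hΔ hΘ
      rw [semD, semD]
      refine le_trans (abs_max_sub_max_le_abs _ _ _) ?_
      simpa using h
  | DF.and ψ₁ ψ₂, Δ, Θ, hΔ, hΘ => by
      have h1 := semD_lip T hwf hfin db hsbm ψ₁ Δ Θ hΔ hΘ
      have h2 := semD_lip T hwf hfin db hsbm ψ₂ Δ Θ hΔ hΘ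
      rw [semD, semD]
      exact le_trans (abs_min_sub_min_le_max _ _ _ _) (max_le h1 h2)
  | DF.box φ, Δ, Θ, hΔ, hΘ => by
      rw [semD, semD]
      refine abs_le_kan hΔ hΘ fun ω hω => ?_
      exact sum_diff_le_matching hω (semS T φ)
        (fun u v => semS_lip T hwf hfin db hsbm φ u v)
end

end AuxSound

/-- Soundness of the metric HML for distributions: distribution formulae are
non-expansive with respect to the Kantorovich lifting of the state-based
bisimilarity metric. -/
theorem hml_dist_soundness {S A : Type} [Fintype S] (T : PLTS S A)
    (hwf : WellFormed T) (hfin : ImageFinite T)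
    (db : S → S → ℝ)
    (hdb : IsSBM T db ∧ ∀ d, IsSBM T d → ∀ s t, db s t ≤ d s t) :
    ∀ (ψ : DF A) (Δ₁ Δ₂ : S → ℝ), IsDist Δ₁ → IsDist Δ₂ →
      |semD T ψ Δ₁ - semD T ψ Δ₂| ≤ Kan db Δ₁ Δ₂ := by
  intro ψ Δ₁ Δ₂ h1 h2
  exact semD_lip T hwf hfin db hdb.1 ψ Δ₁ Δ₂ h1 h2
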